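/- Let Σ be a symmetric positive definite d×d matrix, b ∈ ℝ^d, σ > 0, and a₁, ã ∈ ℝ^d. In the anticausal model Y = ε_Y, X = bY + a + ε_X (with a = a₁ for source and a = ã for target, Var(ε_Y) = σ², Cov(ε_X) = Σ, uncorrelated noises), the source-optimal linear predictor (β*, β₀*) = argmin over (β, β₀) of the source risk satisfies β* = σ²Σ⁻¹b/(1 + σ²bᵀΣ⁻¹b), and its target population risk equals σ²/(1 + σ²bᵀΣ⁻¹b) + (σ²·bᵀΣ⁻¹(a₁ − ã))² / (1 + σ²bᵀΣ⁻¹b)². -/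

import Mathlib

/-!
Because the noises are centred and uncorrelated, the risk of `(β, β₀)` in the model with shift
`a` is `s (1 - βᵀb)² + βᵀΣβ + (βᵀa + β₀)²` with `s = σ²`. Completing the square around
`β* = s Σ⁻¹b / (1 + s bᵀΣ⁻¹b)` turns the first two terms into
`s / (1 + s bᵀΣ⁻¹b) + s ((β - β*)ᵀb)² + (β - β*)ᵀΣ(β - β*)`, so positive definiteness of `Σ`
forces the source minimiser to be `β = β*`, `β₀ = -β*ᵀa₁`. At the target only the intercept
term changes, and it equals `(β*ᵀ(a₁ - ã))²`.
-/

open Matrix MeasureTheory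

section SecondMoments

variable {Ω ι : Type*} [MeasurableSpace Ω] {μ : Measure Ω} [Fintype ι]

lemma integral_add_sq {U V : Ω → ℝ} (hU : MemLp U 2 μ) (hV : MemLp V 2 μ) :
    ∫ ω, (U ω + V ω) ^ 2 ∂μ
      = ∫ ω, U ω ^ 2 ∂μ + 2 * ∫ ω, U ω * V ω ∂μ + ∫ ω, V ω ^ 2 ∂μ := by
  have hUV : Integrable (fun ω => U ω * V ω) μ := hU.integrable_mul hV
  calc ∫ ω, (U ω + V ω) ^ 2 ∂μ = ∫ ω, U ω ^ 2 + 2 * (U ω * V ω) + V ω ^ 2 ∂μ := by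
        congr with ω; ring
    _ = _ := by
      rw [integral_add _ hV.integrable_sq, integral_add hU.integrable_sq (hUV.const_mul 2),
        integral_const_mul]
      exact hU.integrable_sq.add (hUV.const_mul 2)

lemma memLp_dotProduct {p : ENNReal} {X : ι → Ω → ℝ} (hX : ∀ i, MemLp (X i) p μ) (β : ι → ℝ) :
    MemLp (fun ω => β ⬝ᵥ fun i => X i ω) p μ := by
  simpa only [dotProduct, Finset.sum_fn] using
    memLp_finsetSum' Finset.univ fun i _ => (hX i).const_mul (β i)

lemma integrable_dotProduct {X : ι → Ω → ℝ} (hX : ∀ i, Integrable (X i) μ) (β : ι → ℝ) :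
    Integrable (fun ω => β ⬝ᵥ fun i => X i ω) μ :=
  integrable_finsetSum _ fun i _ => (hX i).const_mul (β i)

lemma integral_dotProduct {X : ι → Ω → ℝ} (hX : ∀ i, Integrable (X i) μ) (β : ι → ℝ) :
    ∫ ω, (β ⬝ᵥ fun i => X i ω) ∂μ = β ⬝ᵥ fun i => ∫ ω, X i ω ∂μ := by
  simp only [dotProduct]
  rw [integral_finsetSum _ fun i _ => (hX i).const_mul (β i)]
  simp only [integral_const_mul]

lemma integral_dotProduct_sq {X : ι → Ω → ℝ}
    (hX : ∀ i j, Integrable (fun ω => X i ω * X j ω) μ) (β : ι → ℝ) :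
    ∫ ω, (β ⬝ᵥ fun i => X i ω) ^ 2 ∂μ
      = β ⬝ᵥ (of fun i j => ∫ ω, X i ω * X j ω ∂μ) *ᵥ β := by
  have hsq : ∀ ω, (β ⬝ᵥ fun i => X i ω) ^ 2
      = β ⬝ᵥ fun i => β ⬝ᵥ fun j => X i ω * X j ω := by
    intro ω
    simp only [dotProduct, sq, Finset.sum_mul, Finset.mul_sum]
    exact Finset.sum_congr rfl fun i _ => Finset.sum_congr rfl fun j _ => by ring
  simp_rw [hsq]
  rw [integral_dotProduct (fun i => integrable_dotProduct (hX i) β)]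
  simp_rw [integral_dotProduct (hX _)]
  congr with i
  exact dotProduct_comm _ _

end SecondMoments

section Model

variable {Ω ι : Type*} [MeasurableSpace Ω] {μ : Measure Ω} [IsProbabilityMeasure μ] [Fintype ι]

lemma integral_sq_sub_dotProduct_sub {S : Matrix ι ι ℝ} {σ : ℝ}
    {εY : Ω → ℝ} {εX : ι → Ω → ℝ} (hY : MemLp εY 2 μ) (hX : ∀ i, MemLp (εX i) 2 μ)
    (hmY : ∫ ω, εY ω ∂μ = 0) (hvY : ∫ ω, εY ω ^ 2 ∂μ = σ ^ 2)
    (hmX : ∀ i, ∫ ω, εX i ω ∂μ = 0) (hcX : ∀ i j, ∫ ω, εX i ω * εX j ω ∂μ = S i j)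
    (hYX : ∀ i, ∫ ω, εY ω * εX i ω ∂μ = 0) (c : ℝ) (β : ι → ℝ) (m : ℝ) :
    ∫ ω, (c * εY ω - (β ⬝ᵥ fun i => εX i ω) - m) ^ 2 ∂μ
      = c ^ 2 * σ ^ 2 + β ⬝ᵥ S *ᵥ β + m ^ 2 := by
  have hXi : ∀ i, Integrable (εX i) μ := fun i => (hX i).integrable one_le_two
  have hYXi : ∀ i, Integrable (fun ω => εY ω * εX i ω) μ := fun i => hY.integrable_mul (hX i)
  have hXXij : ∀ i j, Integrable (fun ω => εX i ω * εX j ω) μ := fun i j =>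
    (hX i).integrable_mul (hX j)
  set Z : Ω → ℝ := fun ω => c * εY ω - β ⬝ᵥ fun i => εX i ω
  have hβX : MemLp (fun ω => β ⬝ᵥ fun i => εX i ω) 2 μ := memLp_dotProduct hX β
  have hZ : MemLp Z 2 μ := (hY.const_mul c).sub hβX
  have hZ_mean : ∫ ω, Z ω ∂μ = 0 := by
    rw [integral_sub ((hY.integrable one_le_two).const_mul c) (integrable_dotProduct hXi β),
      integral_const_mul, integral_dotProduct hXi]
    simp [hmY, hmX]
  have hZ_sq : ∫ ω, Z ω ^ 2 ∂μ = c ^ 2 * σ ^ 2 + β ⬝ᵥ S *ᵥ β := by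
    have hcross : ∫ ω, c * εY ω * -(β ⬝ᵥ fun i => εX i ω) ∂μ = 0 := by
      have : ∀ ω, c * εY ω * -(β ⬝ᵥ fun i => εX i ω) = -c * (β ⬝ᵥ fun i => εY ω * εX i ω) := by
        intro ω
        simp only [dotProduct, Finset.mul_sum, ← Finset.sum_neg_distrib]
        exact Finset.sum_congr rfl fun i _ => by ring
      simp_rw [this]
      rw [integral_const_mul, integral_dotProduct hYXi]
      simp [hYX]
    have hS : (of fun i j => ∫ ω, εX i ω * εX j ω ∂μ) = S := by ext i j; exact hcX i j
    simp only [Z, sub_eq_add_neg]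
    rw [integral_add_sq (V := fun ω => -(β ⬝ᵥ fun i => εX i ω)) (hY.const_mul c) hβX.neg,
      hcross]
    simp only [mul_pow, neg_sq, integral_const_mul, hvY, integral_dotProduct_sq hXXij, hS]
    ring
  calc ∫ ω, (Z ω - m) ^ 2 ∂μ
      = ∫ ω, Z ω ^ 2 ∂μ + 2 * ∫ ω, Z ω * -m ∂μ + ∫ ω, (-m) ^ 2 ∂μ := by
        simp only [sub_eq_add_neg]; exact integral_add_sq hZ (memLp_const _)
    _ = c ^ 2 * σ ^ 2 + β ⬝ᵥ S *ᵥ β + m ^ 2 := by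
        simp [integral_neg, integral_mul_const, hZ_mean, hZ_sq]

/-- The population risk `E(Y - βᵀX - β₀)²` in the anticausal model with `Var ε_Y = s`,
`Cov ε_X = S` and shift `a`. -/
def anticausalRisk (S : Matrix ι ι ℝ) (b a : ι → ℝ) (s : ℝ) (β : ι → ℝ) (β0 : ℝ) : ℝ :=
  s * (1 - β ⬝ᵥ b) ^ 2 + β ⬝ᵥ S *ᵥ β + (β ⬝ᵥ a + β0) ^ 2

lemma integral_sq_error_eq_anticausalRisk {S : Matrix ι ι ℝ} {σ : ℝ}
    {εY : Ω → ℝ} {εX : ι → Ω → ℝ} (hY : MemLp εY 2 μ) (hX : ∀ i, MemLp (εX i) 2 μ)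
    (hmY : ∫ ω, εY ω ∂μ = 0) (hvY : ∫ ω, εY ω ^ 2 ∂μ = σ ^ 2)
    (hmX : ∀ i, ∫ ω, εX i ω ∂μ = 0) (hcX : ∀ i j, ∫ ω, εX i ω * εX j ω ∂μ = S i j)
    (hYX : ∀ i, ∫ ω, εY ω * εX i ω ∂μ = 0) (b a β : ι → ℝ) (β0 : ℝ) :
    ∫ ω, (εY ω - β ⬝ᵥ (fun i => b i * εY ω + a i + εX i ω) - β0) ^ 2 ∂μ
      = anticausalRisk S b a (σ ^ 2) β β0 := by
  have hX_affine : ∀ ω,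
      (fun i => b i * εY ω + a i + εX i ω) = εY ω • b + a + fun i => εX i ω := by
    intro ω; funext i; simp [mul_comm]
  have hres : ∀ ω, εY ω - β ⬝ᵥ (fun i => b i * εY ω + a i + εX i ω) - β0
      = (1 - β ⬝ᵥ b) * εY ω - (β ⬝ᵥ fun i => εX i ω) - (β ⬝ᵥ a + β0) := by
    intro ω
    rw [hX_affine, dotProduct_add, dotProduct_add, dotProduct_smul, smul_eq_mul]
    ring
  simp_rw [hres]
  rw [integral_sq_sub_dotProduct_sub hY hX hmY hvY hmX hcX hYX, anticausalRisk]
  ring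

end Model

section Algebra

variable {ι : Type*} [Fintype ι]

lemma Matrix.IsSymm.dotProduct_mulVec_comm {α : Type*} [CommSemiring α] {S : Matrix ι ι α}
    (hS : S.IsSymm) (x y : ι → α) :
    x ⬝ᵥ S *ᵥ y = y ⬝ᵥ S *ᵥ x := by
  rw [dotProduct_mulVec, ← mulVec_transpose, hS.eq, dotProduct_comm]

variable [DecidableEq ι]

noncomputable def optimalCoeff (S : Matrix ι ι ℝ) (b : ι → ℝ) (s : ℝ) : ι → ℝ :=
  (s / (1 + s * (b ⬝ᵥ S⁻¹ *ᵥ b))) • S⁻¹ *ᵥ b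

variable {S : Matrix ι ι ℝ}

lemma Matrix.PosDef.one_add_mul_dotProduct_inv_mulVec_pos (hS : S.PosDef) (b : ι → ℝ) {s : ℝ}
    (hs : 0 ≤ s) : 0 < 1 + s * (b ⬝ᵥ S⁻¹ *ᵥ b) := by
  have := hS.inv.posSemidef.dotProduct_mulVec_nonneg b
  simp only [star_trivial] at this
  positivity

lemma Matrix.PosDef.mulVec_inv_mulVec (hS : S.PosDef) (b : ι → ℝ) : S *ᵥ S⁻¹ *ᵥ b = b := by
  rw [mulVec_mulVec, mul_nonsing_inv _ ((isUnit_iff_isUnit_det S).mp hS.isUnit), one_mulVec]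

lemma optimalCoeff_dotProduct (hS : S.PosDef) (b x : ι → ℝ) (s : ℝ) :
    optimalCoeff S b s ⬝ᵥ x = s / (1 + s * (b ⬝ᵥ S⁻¹ *ᵥ b)) * (b ⬝ᵥ S⁻¹ *ᵥ x) := by
  have hsymm : S⁻¹.IsSymm := (isHermitian_iff_isSymm.mp hS.inv.1)
  rw [optimalCoeff, smul_dotProduct, smul_eq_mul, dotProduct_comm (S⁻¹ *ᵥ b),
    hsymm.dotProduct_mulVec_comm x b]

lemma mulVec_optimalCoeff (hS : S.PosDef) (b : ι → ℝ) (s : ℝ) :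
    S *ᵥ optimalCoeff S b s = (s / (1 + s * (b ⬝ᵥ S⁻¹ *ᵥ b))) • b := by
  rw [optimalCoeff, mulVec_smul, hS.mulVec_inv_mulVec]

lemma anticausalRisk_eq (hS : S.PosDef) (b a : ι → ℝ) {s : ℝ} (hs : 0 ≤ s) (β : ι → ℝ) (β0 : ℝ) :
    anticausalRisk S b a s β β0 = s / (1 + s * (b ⬝ᵥ S⁻¹ *ᵥ b))
      + s * ((β - optimalCoeff S b s) ⬝ᵥ b) ^ 2
      + (β - optimalCoeff S b s) ⬝ᵥ S *ᵥ (β - optimalCoeff S b s) + (β ⬝ᵥ a + β0) ^ 2 := by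
  have hsymm : S.IsSymm := isHermitian_iff_isSymm.mp hS.1
  have hk := (hS.one_add_mul_dotProduct_inv_mulVec_pos b hs).ne'
  set β' := optimalCoeff S b s
  have h1 : β ⬝ᵥ S *ᵥ β' = s / (1 + s * (b ⬝ᵥ S⁻¹ *ᵥ b)) * (β ⬝ᵥ b) := by
    rw [mulVec_optimalCoeff hS, dotProduct_smul, smul_eq_mul]
  have h2 : β' ⬝ᵥ S *ᵥ β = s / (1 + s * (b ⬝ᵥ S⁻¹ *ᵥ b)) * (β ⬝ᵥ b) := by
    rw [hsymm.dotProduct_mulVec_comm, h1]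
  have h3 : β' ⬝ᵥ S *ᵥ β' = s / (1 + s * (b ⬝ᵥ S⁻¹ *ᵥ b)) * (β' ⬝ᵥ b) := by
    rw [mulVec_optimalCoeff hS, dotProduct_smul, smul_eq_mul]
  have hb : β' ⬝ᵥ b = s / (1 + s * (b ⬝ᵥ S⁻¹ *ᵥ b)) * (b ⬝ᵥ S⁻¹ *ᵥ b) :=
    optimalCoeff_dotProduct hS b b s
  simp only [anticausalRisk, mulVec_sub, sub_dotProduct, dotProduct_sub, h1, h2, h3, hb]
  field_simp
  ring

lemma anticausalRisk_optimalCoeff (hS : S.PosDef) (b a : ι → ℝ) {s : ℝ} (hs : 0 ≤ s) (β0 : ℝ) :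
    anticausalRisk S b a s (optimalCoeff S b s) β0
      = s / (1 + s * (b ⬝ᵥ S⁻¹ *ᵥ b)) + (optimalCoeff S b s ⬝ᵥ a + β0) ^ 2 := by
  simp [anticausalRisk_eq hS b a hs]

lemma eq_optimalCoeff_of_forall_anticausalRisk_le (hS : S.PosDef) (b a : ι → ℝ) {s : ℝ}
    (hs : 0 ≤ s) {β : ι → ℝ} {β0 : ℝ}
    (hmin : ∀ β' β0', anticausalRisk S b a s β β0 ≤ anticausalRisk S b a s β' β0') :
    β = optimalCoeff S b s ∧ β ⬝ᵥ a + β0 = 0 := by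
  set v := β - optimalCoeff S b s
  have h := hmin (optimalCoeff S b s) (-(optimalCoeff S b s ⬝ᵥ a))
  rw [anticausalRisk_eq hS b a hs, anticausalRisk_optimalCoeff hS b a hs, add_neg_cancel] at h
  have hvb : 0 ≤ s * (v ⬝ᵥ b) ^ 2 := by positivity
  have hvSv : 0 ≤ v ⬝ᵥ S *ᵥ v := by
    simpa using hS.posSemidef.dotProduct_mulVec_nonneg v
  have hm : 0 ≤ (β ⬝ᵥ a + β0) ^ 2 := sq_nonneg _
  refine ⟨sub_eq_zero.mp ?_, pow_eq_zero_iff two_ne_zero |>.mp (by linarith)⟩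
  by_contra hv
  have := hS.dotProduct_mulVec_pos hv
  simp only [star_trivial] at this
  linarith

end Algebra

theorem stmt14_general {Ω : Type*} [MeasurableSpace Ω] (μ : Measure Ω) [IsProbabilityMeasure μ]
    {d : ℕ} (S : Matrix (Fin d) (Fin d) ℝ) (hS : S.PosDef)
    (b a1 atil : Fin d → ℝ) (σ : ℝ)
    (εY : Ω → ℝ) (εX : Fin d → Ω → ℝ)
    (hY1 : Integrable εY μ) (hY2 : Integrable (fun ω => εY ω ^ 2) μ)
    (hX1 : ∀ i, Integrable (εX i) μ)
    (hX2 : ∀ i j, Integrable (fun ω => εX i ω * εX j ω) μ)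
    (hmY : ∫ ω, εY ω ∂μ = 0) (hvY : ∫ ω, εY ω ^ 2 ∂μ = σ ^ 2)
    (hmX : ∀ i, ∫ ω, εX i ω ∂μ = 0)
    (hcX : ∀ i j, ∫ ω, εX i ω * εX j ω ∂μ = S i j)
    (hYXc : ∀ i, ∫ ω, εY ω * εX i ω ∂μ = 0)
    (βs : Fin d → ℝ) (β0s : ℝ)
    (hmin : ∀ (β : Fin d → ℝ) (β0 : ℝ),
      ∫ ω, (εY ω - βs ⬝ᵥ (fun i => b i * εY ω + a1 i + εX i ω) - β0s) ^ 2 ∂μ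
        ≤ ∫ ω, (εY ω - β ⬝ᵥ (fun i => b i * εY ω + a1 i + εX i ω) - β0) ^ 2 ∂μ) :
    βs = (σ ^ 2 / (1 + σ ^ 2 * (b ⬝ᵥ S⁻¹.mulVec b))) • S⁻¹.mulVec b ∧
    ∫ ω, (εY ω - βs ⬝ᵥ (fun i => b i * εY ω + atil i + εX i ω) - β0s) ^ 2 ∂μ
      = σ ^ 2 / (1 + σ ^ 2 * (b ⬝ᵥ S⁻¹.mulVec b))
        + (σ ^ 2 * (b ⬝ᵥ S⁻¹.mulVec (a1 - atil))) ^ 2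
          / (1 + σ ^ 2 * (b ⬝ᵥ S⁻¹.mulVec b)) ^ 2 := by
  have hY : MemLp εY 2 μ := (memLp_two_iff_integrable_sq hY1.1).mpr hY2
  have hX : ∀ i, MemLp (εX i) 2 μ := fun i =>
    (memLp_two_iff_integrable_sq (hX1 i).1).mpr (by simpa only [sq] using hX2 i i)
  have hrisk := integral_sq_error_eq_anticausalRisk hY hX hmY hvY hmX hcX hYXc b
  have hs : 0 ≤ σ ^ 2 := sq_nonneg σ
  simp only [hrisk] at hmin
  obtain ⟨rfl, hβ0⟩ := eq_optimalCoeff_of_forall_anticausalRisk_le hS b a1 hs hmin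
  refine ⟨rfl, ?_⟩
  have hk := (hS.one_add_mul_dotProduct_inv_mulVec_pos b hs).ne'
  have hβ0' : optimalCoeff S b (σ ^ 2) ⬝ᵥ atil + β0s
      = -(optimalCoeff S b (σ ^ 2) ⬝ᵥ (a1 - atil)) := by
    rw [dotProduct_sub]; linarith
  rw [hrisk, anticausalRisk_optimalCoeff hS b atil hs, hβ0', optimalCoeff_dotProduct hS]
  field_simp

/-- The source-optimal linear predictor in the anticausal model
`Y = ε_Y`, `X = bY + a + ε_X` has coefficient `β* = σ²Σ⁻¹b/(1 + σ²bᵀΣ⁻¹b)`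
and target population risk
`σ²/(1 + σ²bᵀΣ⁻¹b) + (σ²bᵀΣ⁻¹(a₁ − ã))²/(1 + σ²bᵀΣ⁻¹b)²`. -/
theorem stmt14 {Ω : Type*} [MeasurableSpace Ω] (μ : Measure Ω) [IsProbabilityMeasure μ]
    {d : ℕ} (S : Matrix (Fin d) (Fin d) ℝ) (hS : S.PosDef) (hsymm : S.IsSymm)
    (b a1 atil : Fin d → ℝ) (σ : ℝ) (hσ : 0 < σ)
    (εY : Ω → ℝ) (εX : Fin d → Ω → ℝ)
    (hY1 : Integrable εY μ) (hY2 : Integrable (fun ω => εY ω ^ 2) μ)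
    (hX1 : ∀ i, Integrable (εX i) μ)
    (hX2 : ∀ i j, Integrable (fun ω => εX i ω * εX j ω) μ)
    (hYX : ∀ i, Integrable (fun ω => εY ω * εX i ω) μ)
    (hmY : ∫ ω, εY ω ∂μ = 0) (hvY : ∫ ω, εY ω ^ 2 ∂μ = σ ^ 2)
    (hmX : ∀ i, ∫ ω, εX i ω ∂μ = 0)
    (hcX : ∀ i j, ∫ ω, εX i ω * εX j ω ∂μ = S i j)
    (hYXc : ∀ i, ∫ ω, εY ω * εX i ω ∂μ = 0)
    (βs : Fin d → ℝ) (β0s : ℝ)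
    (hmin : ∀ (β : Fin d → ℝ) (β0 : ℝ),
      ∫ ω, (εY ω - βs ⬝ᵥ (fun i => b i * εY ω + a1 i + εX i ω) - β0s) ^ 2 ∂μ
        ≤ ∫ ω, (εY ω - β ⬝ᵥ (fun i => b i * εY ω + a1 i + εX i ω) - β0) ^ 2 ∂μ) :
    βs = (σ ^ 2 / (1 + σ ^ 2 * (b ⬝ᵥ S⁻¹.mulVec b))) • S⁻¹.mulVec b ∧
    ∫ ω, (εY ω - βs ⬝ᵥ (fun i => b i * εY ω + atil i + εX i ω) - β0s) ^ 2 ∂μ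
      = σ ^ 2 / (1 + σ ^ 2 * (b ⬝ᵥ S⁻¹.mulVec b))
        + (σ ^ 2 * (b ⬝ᵥ S⁻¹.mulVec (a1 - atil))) ^ 2
          / (1 + σ ^ 2 * (b ⬝ᵥ S⁻¹.mulVec b)) ^ 2 :=
  stmt14_general μ S hS b a1 atil σ εY εX hY1 hY2 hX1 hX2 hmY hvY hmX hcX hYXc βs β0s hmin
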